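/- arXiv:2211.15633 — 3 statements merged into one kernel-verified Lean document; each statement's English description precedes it below -/
import Mathlib

section
/- For every real number α with 0 < α < 1 and every real number x with 0 ≤ x < 1, we have (1+x)^(1+α) ≤ 1 + (1+α)x + (1+α)·α·x². -/
theorem stmt_1 (α x : ℝ) (hα0 : 0 < α) (hα1 : α < 1) (hx0 : 0 ≤ x) (hx1 : x < 1) :
    (1 + x) ^ (1 + α) ≤ 1 + (1 + α) * x + (1 + α) * α * x ^ 2 := by
  have hb : (1 + x) ^ α ≤ 1 + α * x :=
    rpow_one_add_le_one_add_mul_self (by linarith) hα0.le hα1.le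
  have h1 : (0:ℝ) ≤ 1 + x := by linarith
  have key : (1 + x) ^ (1 + α) = (1 + x) * (1 + x) ^ α := by
    rw [Real.rpow_add' h1 (by linarith), Real.rpow_one]
  rw [key]
  have h2 : (1 + x) * (1 + x) ^ α ≤ (1 + x) * (1 + α * x) :=
    mul_le_mul_of_nonneg_left hb h1
  nlinarith [sq_nonneg x, mul_nonneg (mul_nonneg hα0.le hα0.le) (sq_nonneg x)]
end

section
/- Let α, β > 0 be real numbers with α ≤ β, let n₀ be a natural number, and let f : ℕ → ℝ≥0 satisfy α·n ≤ f(n) ≤ β·n for all n ≥ n₀. For N > n₀, set k₀ = ⌊2N/(2+α)⌋. Then (α/2)(N² - k₀²) - (N - k₀)² ≥ (α²/(2(α+2)))·N² - C·N for some constant C depending only on α (not on N). -/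
theorem stmt_11 (α β : ℝ) (hα : 0 < α) (hβ : 0 < β) (hαβ : α ≤ β)
    (n₀ : ℕ) (f : ℕ → ℝ) (hf : ∀ n ≥ n₀, α * n ≤ f n ∧ f n ≤ β * n) :
    ∃ C : ℝ, ∀ N : ℕ, n₀ < N →
      (α / 2) * ((N : ℝ) ^ 2 - (⌊2 * (N : ℝ) / (2 + α)⌋₊ : ℝ) ^ 2)
        - ((N : ℝ) - (⌊2 * (N : ℝ) / (2 + α)⌋₊ : ℝ)) ^ 2
      ≥ (α ^ 2 / (2 * (α + 2))) * (N : ℝ) ^ 2 - C * N := by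
  refine ⟨(2 + α) / 2, fun N hN => ?_⟩
  have hN1 : (1 : ℝ) ≤ N := by exact_mod_cast Nat.one_le_iff_ne_zero.mpr (by omega)
  have hpos : (0 : ℝ) < 2 + α := by linarith
  set t : ℝ := (⌊2 * (N : ℝ) / (2 + α)⌋₊ : ℝ) with ht
  have hx0 : 0 ≤ 2 * (N : ℝ) / (2 + α) := by positivity
  have hb1 : t ≤ 2 * (N : ℝ) / (2 + α) := Nat.floor_le hx0
  have hb2 : 2 * (N : ℝ) / (2 + α) < t + 1 := Nat.lt_floor_add_one _
  have hb1' : (2 + α) * t ≤ 2 * N := by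
    have := (le_div_iff₀ hpos).mp hb1
    linarith
  have hb2' : 2 * (N : ℝ) < (2 + α) * (t + 1) := by
    have := (div_lt_iff₀ hpos).mp hb2
    linarith
  have key : α ^ 2 / (2 * (α + 2)) * (N : ℝ) ^ 2
      - ((α / 2) * ((N : ℝ) ^ 2 - t ^ 2) - ((N : ℝ) - t) ^ 2)
      = (1 / (2 * (α + 2))) * ((2 + α) * t - 2 * N) ^ 2 := by
    field_simp
    ring
  have hsq : ((2 + α) * t - 2 * N) ^ 2 ≤ (2 + α) ^ 2 := by
    have h1 : 0 ≤ 2 * (N : ℝ) - (2 + α) * t := by linarith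
    have h2 : 2 * (N : ℝ) - (2 + α) * t ≤ 2 + α := by nlinarith
    nlinarith
  have hbound : (1 / (2 * (α + 2))) * ((2 + α) * t - 2 * N) ^ 2 ≤ (2 + α) / 2 := by
    have : (1 / (2 * (α + 2))) * ((2 + α) * t - 2 * N) ^ 2
        ≤ (1 / (2 * (α + 2))) * (2 + α) ^ 2 := by
      apply mul_le_mul_of_nonneg_left hsq; positivity
    calc (1 / (2 * (α + 2))) * ((2 + α) * t - 2 * N) ^ 2
        ≤ (1 / (2 * (α + 2))) * (2 + α) ^ 2 := this
      _ = (2 + α) / 2 := by field_simp; ring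
  have hCN : (2 + α) / 2 ≤ (2 + α) / 2 * N := by nlinarith
  linarith [key, hbound, hCN]
end

section
/- Every finite connected graph G on n ≥ 1 vertices has burning number b(G) ≤ ⌈√(2n)⌉; more precisely, there exists a sequence of fire sources of length at most ⌈√(2n)⌉ after which every vertex of G is burning. -/
open SimpleGraph Finset

section aux

variable {V : Type*}

/-- The burning process given a sequence of fire sources. -/
def burnSet (G : SimpleGraph V) (v : ℕ → V) : ℕ → Set V
  | 0 => ∅
  | i + 1 => {x | x ∈ burnSet G v i ∨ ∃ u ∈ burnSet G v i, G.Adj u x} ∪ {v (i + 1)}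

lemma burnSet_succ (G : SimpleGraph V) (v : ℕ → V) (i : ℕ) :
    burnSet G v (i + 1)
      = {x | x ∈ burnSet G v i ∨ ∃ u ∈ burnSet G v i, G.Adj u x} ∪ {v (i + 1)} := rfl

lemma burnSet_mono_succ (G : SimpleGraph V) (v : ℕ → V) (i : ℕ) :
    burnSet G v i ⊆ burnSet G v (i + 1) :=
  fun _ hx => Set.mem_union_left _ (Or.inl hx)

lemma burnSet_mono (G : SimpleGraph V) (v : ℕ → V) {i j : ℕ} (h : i ≤ j) :
    burnSet G v i ⊆ burnSet G v j := by
  induction j with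
  | zero => simp_all
  | succ j ih =>
    rcases Nat.lt_or_ge i (j+1) with h' | h'
    · exact (ih (by omega)).trans (burnSet_mono_succ G v j)
    · have : i = j + 1 := by omega
      subst this; exact subset_rfl

lemma source_mem_burnSet (G : SimpleGraph V) (v : ℕ → V) (i : ℕ) :
    v (i + 1) ∈ burnSet G v (i + 1) :=
  Set.mem_union_right _ rfl

lemma burnSet_adj (G : SimpleGraph V) (v : ℕ → V) {i : ℕ} {u x : V}
    (hu : u ∈ burnSet G v i) (h : G.Adj u x) : x ∈ burnSet G v (i + 1) :=
  Set.mem_union_left _ (Or.inr ⟨u, hu, h⟩)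

lemma burnSet_walk (G : SimpleGraph V) (v : ℕ → V) {i : ℕ} {s t : V}
    (p : G.Walk s t) (hs : s ∈ burnSet G v i) : t ∈ burnSet G v (i + p.length) := by
  induction p generalizing i with
  | nil => simpa using hs
  | cons h p ih =>
    have := ih (burnSet_adj G v hs h)
    simpa [Nat.add_assoc, Nat.add_comm 1] using this

lemma burnSet_dist (G : SimpleGraph V) (hG : G.Connected) (v : ℕ → V) {i k : ℕ} {s t : V}
    (hs : s ∈ burnSet G v i) (hd : G.dist s t ≤ k) : t ∈ burnSet G v (i + k) := by
  obtain ⟨p, hp⟩ := hG.exists_walk_length_eq_dist s t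
  have := burnSet_walk G v p hs
  exact burnSet_mono G v (by omega) this

lemma dist_getVert_le (G : SimpleGraph V) (hG : G.Connected) {s t : V} (w : G.Walk s t)
    (a k : ℕ) : G.dist (w.getVert a) (w.getVert (a + k)) ≤ k := by
  induction k with
  | zero => simp
  | succ k ih =>
    have htri := hG.dist_triangle (u := w.getVert a) (v := w.getVert (a + k))
      (w := w.getVert (a + k + 1))
    have h1 : G.dist (w.getVert (a + k)) (w.getVert (a + k + 1)) ≤ 1 := by
      by_cases h : a + k < w.length
      · have hadj := w.adj_getVert_succ h
        exact (G.dist_le hadj.toWalk).trans (by simp)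
      · rw [w.getVert_of_length_le (by omega), w.getVert_of_length_le (by omega)]
        simp [SimpleGraph.dist_self]
    calc G.dist (w.getVert a) (w.getVert (a + (k + 1)))
        ≤ G.dist (w.getVert a) (w.getVert (a + k)) + _ := by
          simpa [← Nat.add_assoc] using htri
      _ ≤ k + 1 := by omega

lemma exists_spanning_closed_walk [Fintype V] [DecidableEq V] (G : SimpleGraph V)
    (hG : G.Connected) (a : V) :
    ∃ w : G.Walk a a, (∀ x, x ∈ w.support) ∧ w.length ≤ 2 * (Fintype.card V - 1) := by
  have key : ∀ k (w : G.Walk a a),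
      (Finset.univ.filter (fun x => x ∉ w.support)).card ≤ k →
      ∃ w' : G.Walk a a, (∀ x, x ∈ w'.support) ∧
        w'.length ≤ w.length + 2 * (Finset.univ.filter (fun x => x ∉ w.support)).card := by
    intro k
    induction k with
    | zero =>
      intro w hcard
      refine ⟨w, fun x => ?_, by omega⟩
      by_contra hx
      have : x ∈ Finset.univ.filter (fun x => x ∉ w.support) := by simp [hx]
      have := Finset.card_pos.mpr ⟨x, this⟩
      omega
    | succ k ih =>
      intro w hcard
      by_cases hall : ∀ x, x ∈ w.support
      · exact ⟨w, hall, by omega⟩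
      · push_neg at hall
        obtain ⟨y, hy⟩ := hall
        obtain ⟨p⟩ := hG.preconnected a y
        obtain ⟨d, _, hfst, hsnd⟩ :=
          p.exists_boundary_dart {x | x ∈ w.support} w.start_mem_support hy
        have hx : d.toProd.1 ∈ w.support := hfst
        set w2 : G.Walk a a := (w.takeUntil _ hx).append
          (Walk.cons d.adj (Walk.cons d.adj.symm (w.dropUntil _ hx))) with hw2
        have hlen2 : w2.length = w.length + 2 := by
          have hspec := congrArg Walk.length (w.take_spec hx)
          rw [Walk.length_append] at hspec
          simp [hw2, Walk.length_append, Walk.length_cons]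
          omega
        have hsub : ∀ t, t ∈ w.support → t ∈ w2.support := by
          intro t ht
          rw [← w.take_spec hx, Walk.mem_support_append_iff] at ht
          rw [hw2, Walk.mem_support_append_iff]
          rcases ht with ht | ht
          · exact Or.inl ht
          · right
            simp only [Walk.support_cons, List.mem_cons]
            right; right
            exact ht
        have hz2 : d.toProd.2 ∈ w2.support := by
          rw [hw2, Walk.mem_support_append_iff]
          right
          simp [Walk.support_cons]
        have hzmem : d.toProd.2 ∈ Finset.univ.filter (fun x => x ∉ w.support) := by
          simp only [Finset.mem_filter, Finset.mem_univ, true_and]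
          exact hsnd
        have hsubset : Finset.univ.filter (fun x => x ∉ w2.support) ⊆
            (Finset.univ.filter (fun x => x ∉ w.support)).erase d.toProd.2 := by
          intro t ht
          simp only [Finset.mem_filter, Finset.mem_univ, true_and] at ht
          rw [Finset.mem_erase]
          constructor
          · rintro rfl; exact ht hz2
          · simp only [Finset.mem_filter, Finset.mem_univ, true_and]
            exact fun h => ht (hsub t h)
        have hcard2 : (Finset.univ.filter (fun x => x ∉ w2.support)).card + 1 ≤
            (Finset.univ.filter (fun x => x ∉ w.support)).card := by
          have h1 := Finset.card_le_card hsubset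
          rw [Finset.card_erase_of_mem hzmem] at h1
          have h2 := Finset.card_pos.mpr ⟨_, hzmem⟩
          omega
        obtain ⟨w', hw'supp, hw'len⟩ := ih w2 (by omega)
        exact ⟨w', hw'supp, by omega⟩
  have hstart : (Finset.univ.filter (fun x => x ∉ (Walk.nil : G.Walk a a).support)).card ≤
      Fintype.card V - 1 := by
    have hsub : Finset.univ.filter (fun x => x ∉ (Walk.nil : G.Walk a a).support) ⊆
        Finset.univ.erase a := by
      intro t ht
      simp only [Finset.mem_filter, Finset.mem_univ, true_and, Walk.support_nil,
        List.mem_singleton] at ht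
      simp [Finset.mem_erase, ht]
    have := Finset.card_le_card hsub
    rwa [Finset.card_erase_of_mem (Finset.mem_univ a), Finset.card_univ] at this
  obtain ⟨w', h1, h2⟩ := key _ (Walk.nil : G.Walk a a) le_rfl
  have h3 : (Walk.nil : G.Walk a a).length = 0 := rfl
  exact ⟨w', h1, by omega⟩

lemma sum_range_two_mul_add_one (m : ℕ) : ∑ j ∈ Finset.range m, (2 * j + 1) = m ^ 2 := by
  induction m with
  | zero => simp
  | succ m ih => rw [Finset.sum_range_succ, ih]; ring

end aux

theorem stmt_19 {V : Type*} [Fintype V] (G : SimpleGraph V) (hG : G.Connected)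
    (hn : 1 ≤ Fintype.card V) :
    ∃ m : ℕ, m ≤ ⌈Real.sqrt (2 * Fintype.card V)⌉₊ ∧
      ∃ (v : ℕ → V) (B : ℕ → Set V), B 0 = ∅ ∧
        (∀ i, B (i + 1) = ({x | x ∈ B i ∨ ∃ u ∈ B i, G.Adj u x} ∪ {v (i + 1)})) ∧
        ∀ u : V, u ∈ B m := by
  classical
  set n := Fintype.card V with hncard
  set m := ⌈Real.sqrt (2 * n)⌉₊ with hmdef
  have hm2 : 2 * n ≤ m ^ 2 := by
    have h0 : (0:ℝ) ≤ 2 * n := by positivity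
    have h1 : Real.sqrt (2 * n) ≤ (m : ℝ) := Nat.le_ceil _
    have h2 : (2 * n : ℝ) ≤ (m : ℝ) ^ 2 := by
      have := Real.sq_sqrt h0
      nlinarith [Real.sqrt_nonneg (2 * (n:ℝ))]
    exact_mod_cast (by push_cast at h2 ⊢; linarith : ((2 * n : ℕ) : ℝ) ≤ ((m ^ 2 : ℕ) : ℝ)) |>
      Nat.cast_le.mp
  have hm1 : 1 ≤ m := by nlinarith
  have : Nonempty V := Fintype.card_pos_iff.mp (by omega)
  obtain ⟨a⟩ := this
  obtain ⟨w, hwsupp, hwlen⟩ := exists_spanning_closed_walk G hG a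
  -- interval endpoints
  set f : ℕ → ℕ := fun i => ∑ j ∈ Finset.range i, (2 * (m - (j + 1)) + 1) with hfdef
  have hfm : f m = m ^ 2 := by
    have hre : ∀ j ∈ Finset.range m, 2 * (m - (j + 1)) + 1 = 2 * (m - 1 - j) + 1 := by
      intro j _; congr 2; omega
    rw [hfdef]
    simp only
    rw [Finset.sum_congr rfl hre, Finset.sum_range_reflect (fun j => 2 * j + 1) m]
    exact sum_range_two_mul_add_one m
  set v : ℕ → V := fun i => w.getVert (f (i - 1) + (m - i)) with hvdef
  refine ⟨m, le_rfl, v, burnSet G v, rfl, fun i => rfl, fun u => ?_⟩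
  obtain ⟨q, hqv, hqle⟩ := Walk.mem_support_iff_exists_getVert.mp (hwsupp u)
  have hqfm : q < f m := by
    rw [hfm]
    have : w.length ≤ 2 * (n - 1) := hwlen
    omega
  have hex : ∃ j, q < f j := ⟨m, hqfm⟩
  obtain ⟨i', hqi, hqi', him⟩ : ∃ i', q < f (i' + 1) ∧ f i' ≤ q ∧ i' + 1 ≤ m := by
    have hqi := Nat.find_spec hex
    have him := Nat.find_min' hex hqfm
    have hi0 : Nat.find hex ≠ 0 := by
      intro h
      rw [h] at hqi
      simp [hfdef] at hqi
    refine ⟨Nat.find hex - 1, ?_, ?_, by omega⟩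
    · have heq : Nat.find hex - 1 + 1 = Nat.find hex := by omega
      rw [heq]; exact hqi
    · have := Nat.find_min hex (m := Nat.find hex - 1) (by omega)
      omega
  have hstep : f (i' + 1) = f i' + (2 * (m - (i' + 1)) + 1) := by
    rw [hfdef]; exact Finset.sum_range_succ _ _
  -- the source v (i'+1) sits at walk-position f i' + (m - (i'+1))
  set c := f i' + (m - (i' + 1)) with hcdef
  have hvval : v (i' + 1) = w.getVert c := by
    rw [hvdef]; simp [hcdef]
  have hdist : G.dist (v (i' + 1)) u ≤ m - (i' + 1) := by
    rw [hvval, ← hqv]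
    rcases le_or_gt q c with hqc | hqc
    · have h1 := dist_getVert_le G hG w q (c - q)
      rw [Nat.add_sub_cancel' hqc] at h1
      rw [G.dist_comm]
      exact h1.trans (by omega)
    · have h1 := dist_getVert_le G hG w c (q - c)
      rw [Nat.add_sub_cancel' hqc.le] at h1
      exact h1.trans (by omega)
  have hsrc : v (i' + 1) ∈ burnSet G v (i' + 1) := source_mem_burnSet G v i'
  have := burnSet_dist G hG v hsrc hdist
  have hfin : i' + 1 + (m - (i' + 1)) = m := by omega
  rwa [hfin] at this
end
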